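/- arXiv:1209.0047 — 10 statements merged into one kernel-verified Lean document; each statement's English description precedes it below -/
import Mathlib

section
/- (Case 0 of Table I.) If N1 ≥ N2 ≥ M1, then Pd = Ph1 = Ph2 = Pi, and all four regions equal {(d1,d2) ∈ ℝ² : 0 ≤ d1 ≤ M1, 0 ≤ d2 ≤ min(M2,N2), d1+d2 ≤ min(N2, M1+M2)}. -/
open Set

noncomputable section

/-- Bound L01 : 0 ≤ d1 ≤ min(M1,N1). -/
def L01 (M1 N1 : ℕ) (d : ℝ × ℝ) : Prop := 0 ≤ d.1 ∧ d.1 ≤ min (M1 : ℝ) (N1 : ℝ)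

/-- Bound L02 : 0 ≤ d2 ≤ min(M2,N2). -/
def L02 (M2 N2 : ℕ) (d : ℝ × ℝ) : Prop := 0 ≤ d.2 ∧ d.2 ≤ min (M2 : ℝ) (N2 : ℝ)

/-- Bound L1 : d1/min(N1+N2,M1) + d2/min(N2,M1) ≤ min(N2,M1+M2)/min(N2,M1). -/
def L1 (M1 M2 N1 N2 : ℕ) (d : ℝ × ℝ) : Prop :=
  d.1 / min ((N1 : ℝ) + (N2 : ℝ)) (M1 : ℝ) + d.2 / min (N2 : ℝ) (M1 : ℝ) ≤
    min (N2 : ℝ) ((M1 : ℝ) + (M2 : ℝ)) / min (N2 : ℝ) (M1 : ℝ)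

/-- Bound L2 : d1/min(N1,M2) + d2/min(N1+N2,M2) ≤ min(N1,M1+M2)/min(N1,M2). -/
def L2 (M1 M2 N1 N2 : ℕ) (d : ℝ × ℝ) : Prop :=
  d.1 / min (N1 : ℝ) (M2 : ℝ) + d.2 / min ((N1 : ℝ) + (N2 : ℝ)) (M2 : ℝ) ≤
    min (N1 : ℝ) ((M1 : ℝ) + (M2 : ℝ)) / min (N1 : ℝ) (M2 : ℝ)

/-- Bound L3 : d1+d2 ≤ min(M1+M2, N1+N2, max(M1,N2), max(M2,N1)). -/
def L3 (M1 M2 N1 N2 : ℕ) (d : ℝ × ℝ) : Prop :=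
  d.1 + d.2 ≤
    min (min ((M1 : ℝ) + (M2 : ℝ)) ((N1 : ℝ) + (N2 : ℝ)))
      (min (max (M1 : ℝ) (N2 : ℝ)) (max (M2 : ℝ) (N1 : ℝ)))

/-- Bound L4 : d1 + d2·(N1+2N2−M2)/N2 ≤ N1+N2. -/
def L4 (M2 N1 N2 : ℕ) (d : ℝ × ℝ) : Prop :=
  d.1 + d.2 * (((N1 : ℝ) + 2 * (N2 : ℝ) - (M2 : ℝ)) / (N2 : ℝ)) ≤ (N1 : ℝ) + (N2 : ℝ)

/-- Bound L5 : d2 + d1·(N2+2N1−M1)/N1 ≤ N1+N2. -/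
def L5 (M1 N1 N2 : ℕ) (d : ℝ × ℝ) : Prop :=
  d.2 + d.1 * (((N2 : ℝ) + 2 * (N1 : ℝ) - (M1 : ℝ)) / (N1 : ℝ)) ≤ (N1 : ℝ) + (N2 : ℝ)

/-- Condition 1 : M1 > N1+N2−M2 > N1 > N2 > M2 > N2(N2−M2)/(N1−M2). -/
def Cond1 (M1 M2 N1 N2 : ℕ) : Prop :=
  (M1 : ℝ) > (N1 : ℝ) + (N2 : ℝ) - (M2 : ℝ) ∧
  (N1 : ℝ) + (N2 : ℝ) - (M2 : ℝ) > (N1 : ℝ) ∧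
  (N1 : ℝ) > (N2 : ℝ) ∧ (N2 : ℝ) > (M2 : ℝ) ∧
  (M2 : ℝ) > (N2 : ℝ) * ((N2 : ℝ) - (M2 : ℝ)) / ((N1 : ℝ) - (M2 : ℝ))

/-- Condition 2 : M2 > N1+N2−M1 > N2 > N1 > M1 > N1(N1−M1)/(N2−M1). -/
def Cond2 (M1 M2 N1 N2 : ℕ) : Prop :=
  (M2 : ℝ) > (N1 : ℝ) + (N2 : ℝ) - (M1 : ℝ) ∧
  (N1 : ℝ) + (N2 : ℝ) - (M1 : ℝ) > (N2 : ℝ) ∧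
  (N2 : ℝ) > (N1 : ℝ) ∧ (N1 : ℝ) > (M1 : ℝ) ∧
  (M1 : ℝ) > (N1 : ℝ) * ((N1 : ℝ) - (M1 : ℝ)) / ((N2 : ℝ) - (M1 : ℝ))

/-- DoF outer-bound region under perfect and instantaneous CSIT. -/
def Pinst (M1 M2 N1 N2 : ℕ) : Set (ℝ × ℝ) :=
  {d | L01 M1 N1 d ∧ L02 M2 N2 d ∧ L3 M1 M2 N1 N2 d}

/-- DoF outer-bound region under hybrid CSIT 1. -/
def Ph1 (M1 M2 N1 N2 : ℕ) : Set (ℝ × ℝ) :=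
  {d | L01 M1 N1 d ∧ L02 M2 N2 d ∧ L2 M1 M2 N1 N2 d ∧ L3 M1 M2 N1 N2 d ∧
    (Cond2 M1 M2 N1 N2 → L5 M1 N1 N2 d)}

/-- DoF outer-bound region under hybrid CSIT 2. -/
def Ph2 (M1 M2 N1 N2 : ℕ) : Set (ℝ × ℝ) :=
  {d | L01 M1 N1 d ∧ L02 M2 N2 d ∧ L1 M1 M2 N1 N2 d ∧ L3 M1 M2 N1 N2 d ∧
    (Cond1 M1 M2 N1 N2 → L4 M2 N1 N2 d)}

/-- DoF outer-bound region under delayed CSIT. -/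
def Pd (M1 M2 N1 N2 : ℕ) : Set (ℝ × ℝ) :=
  {d | L01 M1 N1 d ∧ L02 M2 N2 d ∧ L1 M1 M2 N1 N2 d ∧ L2 M1 M2 N1 N2 d ∧
    L3 M1 M2 N1 N2 d ∧ (Cond1 M1 M2 N1 N2 → L4 M2 N1 N2 d) ∧
    (Cond2 M1 M2 N1 N2 → L5 M1 N1 N2 d)}

/-
Under N1 ≥ N2 ≥ M1 the two sum-rate bounds L1 and L2 are implied by the bound
d1 + d2 ≤ min(N2, M1 + M2), to which L3 reduces, and Conditions 1 and 2 both fail, so L4 and L5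
never apply. Since Pd ⊆ Ph1, Ph2 ⊆ Pi always hold, all four regions collapse to Pi.
-/

variable {M1 M2 N1 N2 : ℕ}

theorem not_cond1_of_le (h : M1 ≤ N1) : ¬ Cond1 M1 M2 N1 N2 := by
  rintro ⟨hM, hN, -⟩
  have : (M1 : ℝ) ≤ N1 := by exact_mod_cast h
  linarith

theorem not_cond2_of_le (h : N2 ≤ N1) : ¬ Cond2 M1 M2 N1 N2 := by
  rintro ⟨-, -, hN, -⟩
  have : (N2 : ℝ) ≤ N1 := by exact_mod_cast h
  linarith

theorem L3_iff {d : ℝ × ℝ} (h1 : N2 ≤ N1) (h2 : M1 ≤ N2) :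
    L3 M1 M2 N1 N2 d ↔ d.1 + d.2 ≤ min (N2 : ℝ) (M1 + M2) := by
  have hN : (N2 : ℝ) ≤ N1 := by exact_mod_cast h1
  have hM : (M1 : ℝ) ≤ N2 := by exact_mod_cast h2
  have hbound : min (min ((M1 : ℝ) + M2) (N1 + N2)) (min (max (M1 : ℝ) N2) (max (M2 : ℝ) N1)) =
      min (N2 : ℝ) (M1 + M2) := by
    rw [max_eq_right hM, min_eq_left (hN.trans (le_max_right _ _)), min_assoc,
      min_eq_right (le_add_of_nonneg_left N1.cast_nonneg : (N2 : ℝ) ≤ N1 + N2), min_comm]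
  rw [L3, hbound]

theorem L1_of_add_le {d : ℝ × ℝ} (h : M1 ≤ N2) (hd : d.1 + d.2 ≤ min (N2 : ℝ) (M1 + M2)) :
    L1 M1 M2 N1 N2 d := by
  have hM : (M1 : ℝ) ≤ N2 := by exact_mod_cast h
  rw [L1, min_eq_right (hM.trans (le_add_of_nonneg_left N1.cast_nonneg)),
    min_eq_right hM, ← add_div]
  exact div_le_div_of_nonneg_right hd M1.cast_nonneg

theorem L2_of_add_le {d : ℝ × ℝ} (hN1 : 0 < N1) (hM2 : 0 < M2) (hd2 : 0 ≤ d.2)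
    (hd : d.1 + d.2 ≤ min (N1 : ℝ) (M1 + M2)) : L2 M1 M2 N1 N2 d := by
  have hpos : (0 : ℝ) < min (N1 : ℝ) M2 := lt_min (by exact_mod_cast hN1) (by exact_mod_cast hM2)
  have hden : min (N1 : ℝ) M2 ≤ min ((N1 : ℝ) + N2) M2 :=
    min_le_min_right _ (le_add_of_nonneg_right N2.cast_nonneg)
  calc d.1 / min (N1 : ℝ) M2 + d.2 / min ((N1 : ℝ) + N2) M2
      ≤ d.1 / min (N1 : ℝ) M2 + d.2 / min (N1 : ℝ) M2 := by gcongr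
    _ = (d.1 + d.2) / min (N1 : ℝ) M2 := (add_div _ _ _).symm
    _ ≤ min (N1 : ℝ) (M1 + M2) / min (N1 : ℝ) M2 := by gcongr

theorem Pd_subset_Ph1 : Pd M1 M2 N1 N2 ⊆ Ph1 M1 M2 N1 N2 :=
  fun _ ⟨h01, h02, _, h2, h3, _, h5⟩ => ⟨h01, h02, h2, h3, h5⟩

theorem Pd_subset_Ph2 : Pd M1 M2 N1 N2 ⊆ Ph2 M1 M2 N1 N2 :=
  fun _ ⟨h01, h02, h1, _, h3, h4, _⟩ => ⟨h01, h02, h1, h3, h4⟩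

theorem Ph1_subset_Pinst : Ph1 M1 M2 N1 N2 ⊆ Pinst M1 M2 N1 N2 :=
  fun _ ⟨h01, h02, _, h3, _⟩ => ⟨h01, h02, h3⟩

theorem Ph2_subset_Pinst : Ph2 M1 M2 N1 N2 ⊆ Pinst M1 M2 N1 N2 :=
  fun _ ⟨h01, h02, _, h3, _⟩ => ⟨h01, h02, h3⟩

theorem Pinst_subset_Pd (hN1 : 0 < N1) (hM2 : 0 < M2) (h1 : N2 ≤ N1) (h2 : M1 ≤ N2) :
    Pinst M1 M2 N1 N2 ⊆ Pd M1 M2 N1 N2 := by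
  rintro d ⟨h01, h02, h3⟩
  have hsum := (L3_iff h1 h2).mp h3
  have hN : (N2 : ℝ) ≤ N1 := by exact_mod_cast h1
  refine ⟨h01, h02, L1_of_add_le h2 hsum,
    L2_of_add_le hN1 hM2 h02.1 (hsum.trans (min_le_min_right _ hN)), h3,
    fun hC => absurd hC (not_cond1_of_le (h2.trans h1)), fun hC => absurd hC (not_cond2_of_le h1)⟩

theorem Pinst_eq (h1 : N2 ≤ N1) (h2 : M1 ≤ N2) :
    Pinst M1 M2 N1 N2 =
      {d : ℝ × ℝ | 0 ≤ d.1 ∧ d.1 ≤ (M1 : ℝ) ∧ 0 ≤ d.2 ∧ d.2 ≤ min (M2 : ℝ) (N2 : ℝ) ∧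
        d.1 + d.2 ≤ min (N2 : ℝ) ((M1 : ℝ) + (M2 : ℝ))} := by
  have hM : min (M1 : ℝ) N1 = M1 := min_eq_left (by exact_mod_cast h2.trans h1)
  ext d
  simp only [Pinst, L01, L02, L3_iff h1 h2, hM, Set.mem_ofPred_eq, and_assoc]

theorem case0_all_regions_equal_general (M1 M2 N1 N2 : ℕ)
    (hM2 : 0 < M2) (hN1 : 0 < N1)
    (h1 : N1 ≥ N2) (h2 : N2 ≥ M1) :
    Pd M1 M2 N1 N2 = Ph1 M1 M2 N1 N2 ∧
    Ph1 M1 M2 N1 N2 = Ph2 M1 M2 N1 N2 ∧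
    Ph2 M1 M2 N1 N2 = Pinst M1 M2 N1 N2 ∧
    Pinst M1 M2 N1 N2 =
      {d : ℝ × ℝ | 0 ≤ d.1 ∧ d.1 ≤ (M1 : ℝ) ∧ 0 ≤ d.2 ∧ d.2 ≤ min (M2 : ℝ) (N2 : ℝ) ∧
        d.1 + d.2 ≤ min (N2 : ℝ) ((M1 : ℝ) + (M2 : ℝ))} := by
  have hPd := Pinst_subset_Pd hN1 hM2 h1 h2
  have hPh1 := Ph1_subset_Pinst.trans hPd
  have hPh2 := Ph2_subset_Pinst.trans hPd
  exact ⟨Pd_subset_Ph1.antisymm hPh1,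
    (hPh1.trans Pd_subset_Ph2).antisymm (hPh2.trans Pd_subset_Ph1),
    Ph2_subset_Pinst.antisymm (hPd.trans Pd_subset_Ph2),
    Pinst_eq h1 h2⟩

/-- Case 0 of Table I: if N1 ≥ N2 ≥ M1, then Pd = Ph1 = Ph2 = Pi, all equal to
{(d1,d2) : 0 ≤ d1 ≤ M1, 0 ≤ d2 ≤ min(M2,N2), d1+d2 ≤ min(N2, M1+M2)}. -/
theorem case0_all_regions_equal (M1 M2 N1 N2 : ℕ)
    (hM1 : 0 < M1) (hM2 : 0 < M2) (hN1 : 0 < N1) (hN2 : 0 < N2)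
    (h1 : N1 ≥ N2) (h2 : N2 ≥ M1) :
    Pd M1 M2 N1 N2 = Ph1 M1 M2 N1 N2 ∧
    Ph1 M1 M2 N1 N2 = Ph2 M1 M2 N1 N2 ∧
    Ph2 M1 M2 N1 N2 = Pinst M1 M2 N1 N2 ∧
    Pinst M1 M2 N1 N2 =
      {d : ℝ × ℝ | 0 ≤ d.1 ∧ d.1 ≤ (M1 : ℝ) ∧ 0 ≤ d.2 ∧ d.2 ≤ min (M2 : ℝ) (N2 : ℝ) ∧
        d.1 + d.2 ≤ min (N2 : ℝ) ((M1 : ℝ) + (M2 : ℝ))} :=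
  case0_all_regions_equal_general M1 M2 N1 N2 hM2 hN1 h1 h2
end
end

section
/- (Case A.I.1, hybrid CSIT 2.) If N2 < M1 ≤ N1 ≤ M2, then Ph2 = Pd = {(d1,d2) ∈ ℝ² : d1 ≥ 0, d2 ≥ 0, d1/M1 + d2/N2 ≤ 1}; moreover Pd is a proper subset of Pi, the point (M1−N2, N2) lying in Pi but not in Pd. -/
open Set

noncomputable section

/-- Case A.I.1, hybrid CSIT 2: if N2 < M1 ≤ N1 ≤ M2, then
Ph2 = Pd = {(d1,d2) : d1 ≥ 0, d2 ≥ 0, d1/M1 + d2/N2 ≤ 1}; moreover Pd ⊊ Pi, with the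
point (M1−N2, N2) in Pi but not in Pd. -/
theorem caseAI1_h2 (M1 M2 N1 N2 : ℕ)
    (hM1 : 0 < M1) (hM2 : 0 < M2) (hN1 : 0 < N1) (hN2 : 0 < N2)
    (h1 : N2 < M1) (h2 : M1 ≤ N1) (h3 : N1 ≤ M2) :
    Ph2 M1 M2 N1 N2 = Pd M1 M2 N1 N2 ∧
    Pd M1 M2 N1 N2 =
      {d : ℝ × ℝ | 0 ≤ d.1 ∧ 0 ≤ d.2 ∧ d.1 / (M1 : ℝ) + d.2 / (N2 : ℝ) ≤ 1} ∧
    Pd M1 M2 N1 N2 ⊂ Pinst M1 M2 N1 N2 ∧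
    ((M1 : ℝ) - (N2 : ℝ), (N2 : ℝ)) ∈ Pinst M1 M2 N1 N2 ∧
    ((M1 : ℝ) - (N2 : ℝ), (N2 : ℝ)) ∉ Pd M1 M2 N1 N2 := by
  have cN2 : (0:ℝ) < N2 := by exact_mod_cast hN2
  have r1 : (N2:ℝ) < M1 := by exact_mod_cast h1
  have r2 : (M1:ℝ) ≤ N1 := by exact_mod_cast h2
  have r3 : (N1:ℝ) ≤ M2 := by exact_mod_cast h3
  have cM1 : (0:ℝ) < M1 := lt_trans cN2 r1
  have cN1 : (0:ℝ) < N1 := lt_of_lt_of_le cM1 r2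
  have hC1 : ¬ Cond1 M1 M2 N1 N2 := by
    intro h; have := h.2.2.2.1; linarith
  have hC2 : ¬ Cond2 M1 M2 N1 N2 := by
    intro h; have := h.2.2.1; linarith
  have mA : min ((N1:ℝ) + (N2:ℝ)) (M1:ℝ) = M1 := min_eq_right (by linarith)
  have mB : min (N2:ℝ) (M1:ℝ) = N2 := min_eq_left (le_of_lt r1)
  have mC : min (N2:ℝ) ((M1:ℝ) + (M2:ℝ)) = N2 := min_eq_left (by linarith)
  have mD : min (M2:ℝ) (N2:ℝ) = N2 := min_eq_right (by linarith)
  have mE : min (N1:ℝ) (M2:ℝ) = N1 := min_eq_left r3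
  have mG : min (N1:ℝ) ((M1:ℝ) + (M2:ℝ)) = N1 := min_eq_left (by linarith)
  have mH : min (M1:ℝ) (N1:ℝ) = M1 := min_eq_left r2
  have hmF : (N2:ℝ) ≤ min ((N1:ℝ) + (N2:ℝ)) (M2:ℝ) := le_min (by linarith) (by linarith)
  have mL3 : min (min ((M1:ℝ) + (M2:ℝ)) ((N1:ℝ) + (N2:ℝ)))
      (min (max (M1:ℝ) (N2:ℝ)) (max (M2:ℝ) (N1:ℝ))) = M1 := by
    rw [max_eq_left (le_of_lt r1), max_eq_left r3, min_eq_left (by linarith : (M1:ℝ) ≤ M2)]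
    exact min_eq_right (le_min (by linarith) (by linarith))
  set T : Set (ℝ × ℝ) :=
    {d : ℝ × ℝ | 0 ≤ d.1 ∧ 0 ≤ d.2 ∧ d.1 / (M1 : ℝ) + d.2 / (N2 : ℝ) ≤ 1} with hT
  -- T ⊆ Pd
  have hTPd : T ⊆ Pd M1 M2 N1 N2 := by
    rintro ⟨d1, d2⟩ ⟨hd1, hd2, hsum⟩
    have h1' : d1 / (M1:ℝ) ≤ 1 := by
      have : 0 ≤ d2 / (N2:ℝ) := div_nonneg hd2 (le_of_lt cN2)
      linarith
    have h2' : d2 / (N2:ℝ) ≤ 1 := by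
      have : 0 ≤ d1 / (M1:ℝ) := div_nonneg hd1 (le_of_lt cM1)
      linarith
    have hd1M : d1 ≤ M1 := by
      rw [div_le_one cM1] at h1'; exact h1'
    have hd2N : d2 ≤ N2 := by
      rw [div_le_one cN2] at h2'; exact h2'
    refine ⟨⟨hd1, by rw [mH]; exact hd1M⟩, ⟨hd2, by rw [mD]; exact hd2N⟩, ?_, ?_, ?_, ?_, ?_⟩
    · unfold L1; rw [mA, mB, mC, div_self (ne_of_gt cN2)]; exact hsum
    · unfold L2; rw [mE, mG, div_self (ne_of_gt cN1)]
      calc d1 / (N1:ℝ) + d2 / min ((N1:ℝ) + (N2:ℝ)) (M2:ℝ)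
          ≤ d1 / (M1:ℝ) + d2 / (N2:ℝ) := by
            have e1 : d1 / (N1:ℝ) ≤ d1 / (M1:ℝ) := by gcongr
            have e2 : d2 / min ((N1:ℝ) + (N2:ℝ)) (M2:ℝ) ≤ d2 / (N2:ℝ) := by
              gcongr
            linarith
        _ ≤ 1 := hsum
    · unfold L3; rw [mL3]
      have h := mul_le_mul_of_nonneg_right hsum (le_of_lt (mul_pos cM1 cN2))
      rw [one_mul] at h
      have hexp : (d1 / (M1:ℝ) + d2 / (N2:ℝ)) * ((M1:ℝ) * (N2:ℝ))
          = d1 * (N2:ℝ) + d2 * (M1:ℝ) := by field_simp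
      rw [hexp] at h
      have hbb : d2 * (N2:ℝ) ≤ d2 * (M1:ℝ) := mul_le_mul_of_nonneg_left (le_of_lt r1) hd2
      nlinarith [cN2]
    · intro hc; exact absurd hc hC1
    · intro hc; exact absurd hc hC2
  -- Ph2 ⊆ T
  have hPh2T : Ph2 M1 M2 N1 N2 ⊆ T := by
    rintro ⟨d1, d2⟩ ⟨⟨hd1, _⟩, ⟨hd2, _⟩, hL1, _, _⟩
    refine ⟨hd1, hd2, ?_⟩
    unfold L1 at hL1; rw [mA, mB, mC, div_self (ne_of_gt cN2)] at hL1; exact hL1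
  -- Pd ⊆ Ph2
  have hPdPh2 : Pd M1 M2 N1 N2 ⊆ Ph2 M1 M2 N1 N2 := by
    rintro d ⟨a, b, c, _, e, f, _⟩; exact ⟨a, b, c, e, f⟩
  have hPdT : Pd M1 M2 N1 N2 = T :=
    Set.Subset.antisymm (fun d hd => hPh2T (hPdPh2 hd)) hTPd
  have hPh2Pd : Ph2 M1 M2 N1 N2 = Pd M1 M2 N1 N2 :=
    Set.Subset.antisymm (fun d hd => hTPd (hPh2T hd)) hPdPh2
  have hPdPi : Pd M1 M2 N1 N2 ⊆ Pinst M1 M2 N1 N2 := by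
    rintro d ⟨a, b, _, _, e, _, _⟩; exact ⟨a, b, e⟩
  have hptPi : ((M1:ℝ) - (N2:ℝ), (N2:ℝ)) ∈ Pinst M1 M2 N1 N2 := by
    refine ⟨⟨?_, ?_⟩, ⟨?_, ?_⟩, ?_⟩
    · dsimp only; linarith
    · dsimp only; rw [mH]; linarith
    · dsimp only; linarith
    · dsimp only; rw [mD]
    · unfold L3; dsimp only; rw [mL3]; linarith
  have hptPd : ((M1:ℝ) - (N2:ℝ), (N2:ℝ)) ∉ Pd M1 M2 N1 N2 := by
    rw [hPdT]
    rintro ⟨-, -, hs⟩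
    simp only at hs
    rw [div_self (ne_of_gt cN2)] at hs
    have hpos : 0 < ((M1:ℝ) - N2) / M1 := div_pos (by linarith) cM1
    linarith
  exact ⟨hPh2Pd, hPdT, ⟨hPdPi, fun hsub => hptPd (hsub hptPi)⟩, hptPi, hptPd⟩
end
end

section
/- (Case A.II.) If M1 > N2, N2 ≤ M2, and M2 < N1, then Ph1 = Pi and Ph2 = Pd. -/
open Set

noncomputable section

/-- With `M2 ≤ N1` both denominators of `L2` equal `M2`, so `L2` says `d1 + d2 ≤ min(N1, M1 + M2)`,
which the `M1 + M2` and `max(M2, N1)` terms of `L3` already give. -/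
theorem l2_of_l3 {M1 M2 N1 N2 : ℕ} (h : M2 ≤ N1) {d : ℝ × ℝ} (hd : L3 M1 M2 N1 N2 d) :
    L2 M1 M2 N1 N2 d := by
  have hM2N1 : (M2 : ℝ) ≤ N1 := by exact_mod_cast h
  have hM2N : (M2 : ℝ) ≤ N1 + N2 := le_add_of_le_of_nonneg hM2N1 (Nat.cast_nonneg N2)
  have hsum_le : d.1 + d.2 ≤ min (N1 : ℝ) (M1 + M2) := by
    rw [L3, max_eq_right hM2N1] at hd
    exact le_min (hd.trans (min_le_of_right_le (min_le_right _ _)))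
      (hd.trans (min_le_of_left_le (min_le_left _ _)))
  rw [L2, min_eq_right hM2N1, min_eq_right hM2N, ← add_div]
  exact div_le_div_of_nonneg_right hsum_le (Nat.cast_nonneg M2)

theorem not_cond2_of_le_of_lt {M1 M2 N1 N2 : ℕ} (h2 : N2 ≤ M2) (h3 : M2 < N1) :
    ¬ Cond2 M1 M2 N1 N2 := by
  rintro ⟨-, -, hN1N2, -, -⟩
  exact (Nat.cast_lt.mp hN1N2).not_ge (h2.trans h3.le)

theorem ph1_eq_pinst {M1 M2 N1 N2 : ℕ} (h : M2 ≤ N1) (hc : ¬ Cond2 M1 M2 N1 N2) :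
    Ph1 M1 M2 N1 N2 = Pinst M1 M2 N1 N2 := by
  ext d
  constructor
  · rintro ⟨h01, h02, -, h3, -⟩
    exact ⟨h01, h02, h3⟩
  · rintro ⟨h01, h02, h3⟩
    exact ⟨h01, h02, l2_of_l3 h h3, h3, fun h' => absurd h' hc⟩

theorem ph2_eq_pd {M1 M2 N1 N2 : ℕ} (h : M2 ≤ N1) (hc : ¬ Cond2 M1 M2 N1 N2) :
    Ph2 M1 M2 N1 N2 = Pd M1 M2 N1 N2 := by
  ext d
  constructor
  · rintro ⟨h01, h02, h1, h3, h4⟩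
    exact ⟨h01, h02, h1, l2_of_l3 h h3, h3, h4, fun h' => absurd h' hc⟩
  · rintro ⟨h01, h02, h1, -, h3, h4, -⟩
    exact ⟨h01, h02, h1, h3, h4⟩

theorem caseAII_general (M1 M2 N1 N2 : ℕ)
    (h2 : N2 ≤ M2) (h3 : M2 < N1) :
    Ph1 M1 M2 N1 N2 = Pinst M1 M2 N1 N2 ∧
    Ph2 M1 M2 N1 N2 = Pd M1 M2 N1 N2 :=
  ⟨ph1_eq_pinst h3.le (not_cond2_of_le_of_lt h2 h3),
    ph2_eq_pd h3.le (not_cond2_of_le_of_lt h2 h3)⟩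

/-- Case A.II: if M1 > N2, N2 ≤ M2 and M2 < N1, then Ph1 = Pi and Ph2 = Pd. -/
theorem caseAII (M1 M2 N1 N2 : ℕ)
    (hM1 : 0 < M1) (hM2 : 0 < M2) (hN1 : 0 < N1) (hN2 : 0 < N2)
    (h1 : M1 > N2) (h2 : N2 ≤ M2) (h3 : M2 < N1) :
    Ph1 M1 M2 N1 N2 = Pinst M1 M2 N1 N2 ∧
    Ph2 M1 M2 N1 N2 = Pd M1 M2 N1 N2 :=
  caseAII_general M1 M2 N1 N2 h2 h3
end
end

section
/- (Case B.) If N1 ≥ N2 and M1 > N2 > M2 ≥ 1, then Ph1 = Pi and Ph2 = Pd. -/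
open Set

noncomputable section

/-! When `M2 ≤ N1` every minimum in `L2` involving `M2` equals `M2`, so `L2` says
`d1 + d2 ≤ min(N1, M1 + M2)`, which is part of `L3` because `max(M2, N1) = N1`.
When moreover `N2 ≤ N1`, Condition 2 fails, so `L5` never applies. -/

section CaseB

variable {M1 M2 N1 N2 : ℕ}

theorem L2_of_L3 (h : M2 ≤ N1) {d : ℝ × ℝ} (hd : L3 M1 M2 N1 N2 d) : L2 M1 M2 N1 N2 d := by
  have hM2N1 : (M2 : ℝ) ≤ N1 := by exact_mod_cast h
  have hsum : d.1 + d.2 ≤ min (N1 : ℝ) ((M1 : ℝ) + M2) := by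
    unfold L3 at hd
    rw [max_eq_right hM2N1] at hd
    exact le_min (hd.trans ((min_le_right _ _).trans (min_le_right _ _)))
      (hd.trans ((min_le_left _ _).trans (min_le_left _ _)))
  unfold L2
  rw [min_eq_right hM2N1, min_eq_right (le_add_of_le_of_nonneg hM2N1 N2.cast_nonneg), ← add_div]
  gcongr

theorem Ph1_eq_Pinst (hM2 : M2 ≤ N1) (hN2 : N2 ≤ N1) :
    Ph1 M1 M2 N1 N2 = Pinst M1 M2 N1 N2 := by
  ext d
  simp only [Ph1, Pinst, mem_ofPred_eq]
  constructor
  · rintro ⟨h01, h02, -, h3, -⟩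
    exact ⟨h01, h02, h3⟩
  · rintro ⟨h01, h02, h3⟩
    exact ⟨h01, h02, L2_of_L3 hM2 h3, h3, fun hc => absurd hc (not_cond2_of_le hN2)⟩

theorem Ph2_eq_Pd (hM2 : M2 ≤ N1) (hN2 : N2 ≤ N1) :
    Ph2 M1 M2 N1 N2 = Pd M1 M2 N1 N2 := by
  ext d
  simp only [Ph2, Pd, mem_ofPred_eq]
  constructor
  · rintro ⟨h01, h02, h1, h3, h4⟩
    exact ⟨h01, h02, h1, L2_of_L3 hM2 h3, h3, h4, fun hc => absurd hc (not_cond2_of_le hN2)⟩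
  · rintro ⟨h01, h02, h1, -, h3, h4, -⟩
    exact ⟨h01, h02, h1, h3, h4⟩

end CaseB

theorem caseB_general (M1 M2 N1 N2 : ℕ)
    (h1 : N1 ≥ N2) (h3 : N2 > M2) :
    Ph1 M1 M2 N1 N2 = Pinst M1 M2 N1 N2 ∧
    Ph2 M1 M2 N1 N2 = Pd M1 M2 N1 N2 :=
  have hM2 : M2 ≤ N1 := (Nat.le_of_lt h3).trans h1
  ⟨Ph1_eq_Pinst hM2 h1, Ph2_eq_Pd hM2 h1⟩

/-- Case B: if N1 ≥ N2 and M1 > N2 > M2 ≥ 1, then Ph1 = Pi and Ph2 = Pd. -/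
theorem caseB (M1 M2 N1 N2 : ℕ)
    (hM1 : 0 < M1) (hN1 : 0 < N1) (hN2 : 0 < N2)
    (h1 : N1 ≥ N2) (h2 : M1 > N2) (h3 : N2 > M2) (h4 : 1 ≤ M2) :
    Ph1 M1 M2 N1 N2 = Pinst M1 M2 N1 N2 ∧
    Ph2 M1 M2 N1 N2 = Pd M1 M2 N1 N2 :=
  caseB_general M1 M2 N1 N2 h1 h3
end
end

section
/- (Case A.I.3b, hybrid CSIT 1, Cases I and II.) If M1 > N1 ≥ N2 ≥ 1, N1 < M2 ≤ N1+N2, and N1(M2−N2) ≤ M2(M1−N2), then Ph1 = {(d1,d2) ∈ ℝ² : d1 ≥ 0, 0 ≤ d2 ≤ N2, d1/N1 + d2/M2 ≤ 1}; in particular the sum-rate bound L3 is redundant. -/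
open Set

noncomputable section

/-- Case A.I.3b, hybrid CSIT 1, Cases I and II: if M1 > N1 ≥ N2 ≥ 1, N1 < M2 ≤ N1+N2 and
N1(M2−N2) ≤ M2(M1−N2), then Ph1 = {(d1,d2) : d1 ≥ 0, 0 ≤ d2 ≤ N2, d1/N1 + d2/M2 ≤ 1};
in particular the sum-rate bound L3 is redundant on this region. -/
theorem caseAI3b_h1_I_II (M1 M2 N1 N2 : ℕ)
    (h1 : M1 > N1) (h2 : N1 ≥ N2) (h3 : 1 ≤ N2) (h4 : N1 < M2) (h5 : M2 ≤ N1 + N2)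
    (h6 : (N1 : ℝ) * ((M2 : ℝ) - (N2 : ℝ)) ≤ (M2 : ℝ) * ((M1 : ℝ) - (N2 : ℝ))) :
    Ph1 M1 M2 N1 N2 =
      {d : ℝ × ℝ | 0 ≤ d.1 ∧ 0 ≤ d.2 ∧ d.2 ≤ (N2 : ℝ) ∧
        d.1 / (N1 : ℝ) + d.2 / (M2 : ℝ) ≤ 1} ∧
    (∀ d : ℝ × ℝ,
      (0 ≤ d.1 ∧ 0 ≤ d.2 ∧ d.2 ≤ (N2 : ℝ) ∧ d.1 / (N1 : ℝ) + d.2 / (M2 : ℝ) ≤ 1) →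
        L3 M1 M2 N1 N2 d) := by
  have c1 : (1:ℝ) ≤ N2 := by exact_mod_cast h3
  have c2 : (N2:ℝ) ≤ N1 := by exact_mod_cast h2
  have c3 : (N1:ℝ) < M1 := by exact_mod_cast h1
  have c4 : (N1:ℝ) < M2 := by exact_mod_cast h4
  have c5 : (M2:ℝ) ≤ (N1:ℝ) + N2 := by exact_mod_cast h5
  have hn1 : (0:ℝ) < N1 := by linarith
  have hm2 : (0:ℝ) < M2 := by linarith
  have key : ∀ d : ℝ × ℝ,
      (0 ≤ d.1 ∧ 0 ≤ d.2 ∧ d.2 ≤ (N2:ℝ) ∧ d.1 / (N1:ℝ) + d.2 / (M2:ℝ) ≤ 1) →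
        L3 M1 M2 N1 N2 d := by
    rintro ⟨d1, d2⟩ ⟨hd1, hd2, hd2', hs⟩
    have hmul : d1 * M2 + d2 * N1 ≤ (N1:ℝ) * M2 := by
      rw [div_add_div _ _ (ne_of_gt hn1) (ne_of_gt hm2),
        div_le_one (by positivity)] at hs
      nlinarith
    have hM1 : d1 + d2 ≤ (M1:ℝ) := by
      nlinarith [mul_nonneg (sub_nonneg.2 hd2') (sub_nonneg.2 c4.le)]
    have hM2 : d1 + d2 ≤ (M2:ℝ) := by
      nlinarith [mul_nonneg (sub_nonneg.2 (c2.trans c4.le)) (sub_nonneg.2 c4.le)]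
    unfold L3
    refine le_min (le_min (by linarith) (by linarith)) (le_min ?_ ?_)
    · exact hM1.trans (le_max_left _ _)
    · exact hM2.trans (le_max_left _ _)
  refine ⟨?_, key⟩
  ext ⟨d1, d2⟩
  simp only [Ph1, L01, L02, L2, mem_setOf_eq]
  rw [min_eq_right c3.le, min_eq_right (c2.trans c4.le), min_eq_left c4.le, min_eq_right c5,
    min_eq_left (by linarith : (N1:ℝ) ≤ (M1:ℝ) + M2), div_self (ne_of_gt hn1)]
  constructor
  · rintro ⟨⟨hd1, hd1'⟩, ⟨hd2, hd2'⟩, hL2, _, _⟩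
    exact ⟨hd1, hd2, hd2', hL2⟩
  · rintro ⟨hd1, hd2, hd2', hs⟩
    have hd1' : d1 ≤ (N1:ℝ) := by
      have h2m : 0 ≤ d2 / (M2:ℝ) := by positivity
      have : d1 / (N1:ℝ) ≤ 1 := by linarith
      rwa [div_le_one hn1] at this
    refine ⟨⟨hd1, hd1'⟩, ⟨hd2, hd2'⟩, hs, key (d1, d2) ⟨hd1, hd2, hd2', hs⟩, ?_⟩
    rintro ⟨-, -, hc, -, -⟩
    exact absurd hc (by linarith)
end
end

section
/- (Case A.I.3b, hybrid CSIT 1, Case III.) If M2 > M1 > N1 ≥ N2 ≥ 1, M2 ≤ N1+N2, and N1(M2−N2) > M2(M1−N2), then Ph1 = {(d1,d2) ∈ ℝ² : d1 ≥ 0, 0 ≤ d2 ≤ N2, d1/N1 + d2/M2 ≤ 1, d1+d2 ≤ M1}; moreover the point Q = (N1(M2−M1)/(M2−N1), M2(M1−N1)/(M2−N1)) satisfies Q1/N1 + Q2/M2 = 1 and Q1 + Q2 = M1, and 0 < M2(M1−N1)/(M2−N1) < N2, so that both of these constraints are active at Q. -/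
open Set

noncomputable section

/-- Case A.I.3b, hybrid CSIT 1, Case III: if M2 > M1 > N1 ≥ N2 ≥ 1, M2 ≤ N1+N2 and
N1(M2−N2) > M2(M1−N2), then Ph1 = {(d1,d2) : d1 ≥ 0, 0 ≤ d2 ≤ N2, d1/N1 + d2/M2 ≤ 1,
d1+d2 ≤ M1}; moreover the corner point Q = (N1(M2−M1)/(M2−N1), M2(M1−N1)/(M2−N1))
satisfies Q1/N1 + Q2/M2 = 1, Q1 + Q2 = M1 and 0 < Q2 < N2. -/
theorem caseAI3b_h1_III (M1 M2 N1 N2 : ℕ)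
    (h1 : M2 > M1) (h2 : M1 > N1) (h3 : N1 ≥ N2) (h4 : 1 ≤ N2) (h5 : M2 ≤ N1 + N2)
    (h6 : (N1 : ℝ) * ((M2 : ℝ) - (N2 : ℝ)) > (M2 : ℝ) * ((M1 : ℝ) - (N2 : ℝ))) :
    Ph1 M1 M2 N1 N2 =
      {d : ℝ × ℝ | 0 ≤ d.1 ∧ 0 ≤ d.2 ∧ d.2 ≤ (N2 : ℝ) ∧
        d.1 / (N1 : ℝ) + d.2 / (M2 : ℝ) ≤ 1 ∧ d.1 + d.2 ≤ (M1 : ℝ)} ∧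
    ((N1 : ℝ) * ((M2 : ℝ) - (M1 : ℝ)) / ((M2 : ℝ) - (N1 : ℝ))) / (N1 : ℝ) +
      ((M2 : ℝ) * ((M1 : ℝ) - (N1 : ℝ)) / ((M2 : ℝ) - (N1 : ℝ))) / (M2 : ℝ) = 1 ∧
    (N1 : ℝ) * ((M2 : ℝ) - (M1 : ℝ)) / ((M2 : ℝ) - (N1 : ℝ)) +
      (M2 : ℝ) * ((M1 : ℝ) - (N1 : ℝ)) / ((M2 : ℝ) - (N1 : ℝ)) = (M1 : ℝ) ∧
    0 < (M2 : ℝ) * ((M1 : ℝ) - (N1 : ℝ)) / ((M2 : ℝ) - (N1 : ℝ)) ∧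
    (M2 : ℝ) * ((M1 : ℝ) - (N1 : ℝ)) / ((M2 : ℝ) - (N1 : ℝ)) < (N2 : ℝ) := by
  have hN2 : (1:ℝ) ≤ N2 := by exact_mod_cast h4
  have hN12 : (N2:ℝ) ≤ N1 := by exact_mod_cast h3
  have hM1N1 : (N1:ℝ) < M1 := by exact_mod_cast h2
  have hM2M1 : (M1:ℝ) < M2 := by exact_mod_cast h1
  have hM2s : (M2:ℝ) ≤ N1 + N2 := by exact_mod_cast h5
  have hN1pos : (0:ℝ) < N1 := by linarith
  have hN2pos : (0:ℝ) < N2 := by linarith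
  have hM2pos : (0:ℝ) < M2 := by linarith
  have hden : (0:ℝ) < M2 - N1 := by linarith
  have e1 : min ((M1:ℝ)) (N1:ℝ) = N1 := min_eq_right hM1N1.le
  have e2 : min ((M2:ℝ)) (N2:ℝ) = N2 := min_eq_right (by linarith)
  have e3 : min ((N1:ℝ)) (M2:ℝ) = N1 := min_eq_left (by linarith)
  have e4 : min ((N1:ℝ) + (N2:ℝ)) (M2:ℝ) = M2 := min_eq_right hM2s
  have e5 : min ((N1:ℝ)) ((M1:ℝ) + (M2:ℝ)) = N1 := min_eq_left (by linarith)
  have e6 : min (min ((M1:ℝ) + (M2:ℝ)) ((N1:ℝ) + (N2:ℝ)))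
      (min (max (M1:ℝ) (N2:ℝ)) (max (M2:ℝ) (N1:ℝ))) = M1 := by
    rw [max_eq_left (by linarith), max_eq_left (by linarith), min_eq_left hM2M1.le,
      min_eq_right (le_min (by linarith) (by linarith))]
  refine ⟨?_, ?_, ?_, ?_, ?_⟩
  · ext d
    simp only [Ph1, L01, L02, L2, L3, L5, Cond2, Set.mem_setOf_eq, e1, e2, e3, e4, e5, e6,
      div_self hN1pos.ne']
    constructor
    · rintro ⟨⟨ha, _⟩, ⟨hb, hc⟩, hL2, hL3, _⟩
      exact ⟨ha, hb, hc, hL2, hL3⟩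
    · rintro ⟨ha, hb, hc, hd, he⟩
      have hd1 : d.1 ≤ (N1:ℝ) := by
        rw [← div_le_one hN1pos]
        have : 0 ≤ d.2 / M2 := div_nonneg hb hM2pos.le
        linarith
      exact ⟨⟨ha, hd1⟩, ⟨hb, hc⟩, hd, he, fun hc2 => absurd hc2.2.2.1 (not_lt.mpr hN12)⟩
  · field_simp
    ring
  · field_simp
    ring
  · exact div_pos (by nlinarith) hden
  · rw [div_lt_iff₀ hden]
    nlinarith
end
end

section
/- (Case A.I.3b, hybrid CSIT 2, Cases I and II.) If M2 > N1, M1 > N1 ≥ N2 ≥ 1, M1 ≤ N1+N2, and N2(M1−N1) ≤ M1(M2−N1), then Ph2 = {(d1,d2) ∈ ℝ² : 0 ≤ d1 ≤ N1, d2 ≥ 0, d1/M1 + d2/N2 ≤ 1}; in particular the sum-rate bound L3 is redundant. -/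
open Set

noncomputable section

/-- Case A.I.3b, hybrid CSIT 2, Cases I and II: if M2 > N1, M1 > N1 ≥ N2 ≥ 1,
M1 ≤ N1+N2 and N2(M1−N1) ≤ M1(M2−N1), then
Ph2 = {(d1,d2) : 0 ≤ d1 ≤ N1, d2 ≥ 0, d1/M1 + d2/N2 ≤ 1};
in particular the sum-rate bound L3 is redundant on this region. -/
theorem caseAI3b_h2_I_II (M1 M2 N1 N2 : ℕ)
    (h1 : M2 > N1) (h2 : M1 > N1) (h3 : N1 ≥ N2) (h4 : 1 ≤ N2) (h5 : M1 ≤ N1 + N2)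
    (h6 : (N2 : ℝ) * ((M1 : ℝ) - (N1 : ℝ)) ≤ (M1 : ℝ) * ((M2 : ℝ) - (N1 : ℝ))) :
    Ph2 M1 M2 N1 N2 =
      {d : ℝ × ℝ | 0 ≤ d.1 ∧ d.1 ≤ (N1 : ℝ) ∧ 0 ≤ d.2 ∧
        d.1 / (M1 : ℝ) + d.2 / (N2 : ℝ) ≤ 1} ∧
    (∀ d : ℝ × ℝ,
      (0 ≤ d.1 ∧ d.1 ≤ (N1 : ℝ) ∧ 0 ≤ d.2 ∧ d.1 / (M1 : ℝ) + d.2 / (N2 : ℝ) ≤ 1) →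
        L3 M1 M2 N1 N2 d) := by

  have hm2 : (N1:ℝ) < M2 := by exact_mod_cast h1
  have hm1 : (N1:ℝ) < M1 := by exact_mod_cast h2
  have hn : (N2:ℝ) ≤ N1 := by exact_mod_cast h3
  have hn2 : (1:ℝ) ≤ N2 := by exact_mod_cast h4
  have h5' : (M1:ℝ) ≤ (N1:ℝ) + N2 := by exact_mod_cast h5
  have hN2pos : (0:ℝ) < N2 := by linarith
  have hM1pos : (0:ℝ) < M1 := by linarith
  have key : ∀ d : ℝ × ℝ, 0 ≤ d.1 → d.1 ≤ (N1:ℝ) → 0 ≤ d.2 →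
      d.1 / (M1:ℝ) + d.2 / (N2:ℝ) ≤ 1 → L3 M1 M2 N1 N2 d := by
    intro d hd1 hd1' hd2 hsum
    have hs : d.1 * N2 + (M1:ℝ) * d.2 ≤ (M1:ℝ) * N2 := by
      rw [div_add_div _ _ hM1pos.ne' hN2pos.ne',
        div_le_one (by positivity)] at hsum
      linarith
    unfold L3
    refine le_min (le_min ?_ ?_) (le_min ?_ ?_)
    · nlinarith [mul_nonneg hd1 hN2pos.le]
    · nlinarith [mul_nonneg hd1 (show (0:ℝ) ≤ M1 - N2 by linarith)]
    · rw [max_eq_left (by linarith : (N2:ℝ) ≤ M1)]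
      nlinarith [mul_nonneg (show (0:ℝ) ≤ N1 - d.1 by linarith)
        (show (0:ℝ) ≤ M1 - N2 by linarith)]
    · rw [max_eq_left (by linarith : (N1:ℝ) ≤ M2)]
      nlinarith [mul_nonneg (show (0:ℝ) ≤ N1 - d.1 by linarith)
        (show (0:ℝ) ≤ M1 - N2 by linarith)]
  have e1 : min ((N1:ℝ) + N2) (M1:ℝ) = M1 := min_eq_right h5'
  have e2 : min (N2:ℝ) (M1:ℝ) = N2 := min_eq_left (by linarith)
  have e3 : min (N2:ℝ) ((M1:ℝ) + M2) = N2 := min_eq_left (by linarith)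
  constructor
  · ext d
    constructor
    · rintro ⟨⟨hd1, hd1'⟩, ⟨hd2, _⟩, hL1, _, _⟩
      refine ⟨hd1, le_trans hd1' (min_le_right _ _), hd2, ?_⟩
      unfold L1 at hL1
      rw [e1, e2, e3, div_self hN2pos.ne'] at hL1
      exact hL1
    · rintro ⟨hd1, hd1', hd2, hsum⟩
      have hs : d.1 * N2 + (M1:ℝ) * d.2 ≤ (M1:ℝ) * N2 := by
        have h := hsum
        rw [div_add_div _ _ hM1pos.ne' hN2pos.ne',
          div_le_one (by positivity)] at h
        linarith
      have hd2n : d.2 ≤ (N2:ℝ) := by nlinarith [mul_nonneg hd1 hN2pos.le]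
      refine ⟨⟨hd1, le_min (by linarith) hd1'⟩,
        ⟨hd2, le_min (by linarith) hd2n⟩, ?_, key d hd1 hd1' hd2 hsum, ?_⟩
      · unfold L1
        rw [e1, e2, e3, div_self hN2pos.ne']
        exact hsum
      · intro hc
        exact absurd hc.2.2.2.1 (by linarith)
  · intro d ⟨hd1, hd1', hd2, hsum⟩
    exact key d hd1 hd1' hd2 hsum
end
end

section
/- (The (4,5,3,2) example and the synergistic gain of alternating CSIT.) For antenna numbers (M1,M2,N1,N2) = (4,5,3,2): the point (9/5, 2) belongs to Ph1, and for every real d1 > 9/5 the point (d1, 2) does not belong to Ph1; moreover the point (15/8, 2) belongs to Pi but belongs neither to Ph1 nor to Ph2. -/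
open Set

noncomputable section

/-- The (4,5,3,2) example: (9/5, 2) ∈ Ph1 and no (d1,2) with d1 > 9/5 lies in Ph1;
moreover (15/8, 2) lies in Pi but neither in Ph1 nor in Ph2, demonstrating the
synergistic gain of alternating CSIT. -/
theorem example_4532_alternating :
    ((9 / 5 : ℝ), (2 : ℝ)) ∈ Ph1 4 5 3 2 ∧
    (∀ d1 : ℝ, d1 > 9 / 5 → (d1, (2 : ℝ)) ∉ Ph1 4 5 3 2) ∧
    ((15 / 8 : ℝ), (2 : ℝ)) ∈ Pinst 4 5 3 2 ∧
    ((15 / 8 : ℝ), (2 : ℝ)) ∉ Ph1 4 5 3 2 ∧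
    ((15 / 8 : ℝ), (2 : ℝ)) ∉ Ph2 4 5 3 2 := by
  refine ⟨?_, ?_, ?_, ?_, ?_⟩
  · refine ⟨⟨by norm_num, by norm_num⟩, ⟨by norm_num, by norm_num⟩, by norm_num [L2],
      by norm_num [L3], fun h => absurd h.2.2.1 (by norm_num)⟩
  · rintro d1 hd1 ⟨_, _, hL2, _, _⟩
    simp only [L2] at hL2
    norm_num at hL2
    linarith
  · exact ⟨⟨by norm_num, by norm_num⟩, ⟨by norm_num, by norm_num⟩, by norm_num [L3]⟩
  · rintro ⟨_, _, hL2, _, _⟩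
    simp only [L2] at hL2
    norm_num at hL2
  · rintro ⟨_, _, hL1, _, _⟩
    simp only [L1] at hL1
    norm_num at hL1
end
end

section
/- (HIA parameter consistency, Case I.) Let M1 ≥ M2 > N1 ≥ N2 ≥ 1 be integers with M2 ≤ N1+N2. Set d1* = N1(M2−N2), d2* = M2·N2, t1 = N2, t2 = M2−N2, x = M2−N2, T = M2. Then: (a) d1* − x·t1 ≤ (M1−N2)·t2; (b) d1* = N1·t2; (c) (M2−N2)·t1 = N2·t2; (d) d2* = M2·t1; and (e) the achieved DoF pair (d1*/T, d2*/T) = (N1(M2−N2)/M2, N2) belongs to the region Ph1. -/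
open Set

noncomputable section

/-- HIA parameter consistency, Case I: with M1 ≥ M2 > N1 ≥ N2 ≥ 1 and M2 ≤ N1+N2, the
parameters d1* = N1(M2−N2), d2* = M2·N2, t1 = N2, t2 = M2−N2, x = M2−N2, T = M2 satisfy
the HIA constraints, and the achieved DoF pair (d1*/T, d2*/T) = (N1(M2−N2)/M2, N2)
belongs to Ph1. -/
theorem hia_caseI (M1 M2 N1 N2 : ℕ)
    (h1 : M1 ≥ M2) (h2 : M2 > N1) (h3 : N1 ≥ N2) (h4 : 1 ≤ N2) (h5 : M2 ≤ N1 + N2) :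
    let d1s : ℤ := (N1 : ℤ) * ((M2 : ℤ) - (N2 : ℤ))
    let d2s : ℤ := (M2 : ℤ) * (N2 : ℤ)
    let t1 : ℤ := (N2 : ℤ)
    let t2 : ℤ := (M2 : ℤ) - (N2 : ℤ)
    let x : ℤ := (M2 : ℤ) - (N2 : ℤ)
    let T : ℤ := (M2 : ℤ)
    d1s - x * t1 ≤ ((M1 : ℤ) - (N2 : ℤ)) * t2 ∧
    d1s = (N1 : ℤ) * t2 ∧
    ((M2 : ℤ) - (N2 : ℤ)) * t1 = (N2 : ℤ) * t2 ∧
    d2s = (M2 : ℤ) * t1 ∧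
    ((d1s : ℝ) / (T : ℝ), (d2s : ℝ) / (T : ℝ)) =
      ((N1 : ℝ) * ((M2 : ℝ) - (N2 : ℝ)) / (M2 : ℝ), (N2 : ℝ)) ∧
    ((d1s : ℝ) / (T : ℝ), (d2s : ℝ) / (T : ℝ)) ∈ Ph1 M1 M2 N1 N2 := by
  intro d1s d2s t1 t2 x T
  have hM2R : (0:ℝ) < (M2:ℝ) := by exact_mod_cast (by omega : 0 < M2)
  have hN1R : (0:ℝ) < (N1:ℝ) := by exact_mod_cast (by omega : 0 < N1)
  have hN2M2 : (N2:ℝ) ≤ (M2:ℝ) := by exact_mod_cast (by omega : N2 ≤ M2)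
  have hN1M2 : (N1:ℝ) ≤ (M2:ℝ) := by exact_mod_cast (by omega : N1 ≤ M2)
  have hN1M1 : (N1:ℝ) ≤ (M1:ℝ) := by exact_mod_cast (by omega : N1 ≤ M1)
  have hN2N1 : (N2:ℝ) ≤ (N1:ℝ) := by exact_mod_cast h3
  have hM2N12 : (M2:ℝ) ≤ (N1:ℝ) + (N2:ℝ) := by exact_mod_cast h5
  have hM1M2 : (M2:ℝ) ≤ (M1:ℝ) := by exact_mod_cast h1
  have heq : ((d1s : ℝ) / (T : ℝ), (d2s : ℝ) / (T : ℝ)) =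
      ((N1 : ℝ) * ((M2 : ℝ) - (N2 : ℝ)) / (M2 : ℝ), (N2 : ℝ)) := by
    simp only [d1s, d2s, T, Prod.mk.injEq]
    constructor
    · push_cast; ring
    · push_cast; field_simp
  refine ⟨?_, by ring, by ring, by ring, heq, ?_⟩
  · have : (N1:ℤ) ≤ M1 := by exact_mod_cast (by omega : N1 ≤ M1)
    have h2' : (N2:ℤ) ≤ M2 := by exact_mod_cast (by omega : N2 ≤ M2)
    simp only [d1s, x, t1, t2]
    nlinarith
  · rw [heq]
    have hd1 : (0:ℝ) ≤ (N1 : ℝ) * ((M2 : ℝ) - (N2 : ℝ)) / (M2 : ℝ) := by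
      apply div_nonneg _ hM2R.le
      nlinarith
    have hd1N1 : (N1 : ℝ) * ((M2 : ℝ) - (N2 : ℝ)) / (M2 : ℝ) ≤ (N1:ℝ) := by
      rw [div_le_iff₀ hM2R]; nlinarith
    refine ⟨⟨hd1, ?_⟩, ⟨by positivity, ?_⟩, ?_, ?_, ?_⟩
    · exact le_min (hd1N1.trans hN1M1) hd1N1
    · exact le_min hN2M2 le_rfl
    · unfold L2
      rw [min_eq_left hN1M2, min_eq_right hM2N12,
        min_eq_left (hN1M1.trans (by linarith))]
      rw [div_self hN1R.ne']
      rw [div_add_div _ _ hN1R.ne' hM2R.ne', div_le_one (by positivity)]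
      field_simp
      nlinarith
    · unfold L3
      have : (N1 : ℝ) * ((M2 : ℝ) - (N2 : ℝ)) / (M2 : ℝ) + (N2:ℝ) ≤ (M2:ℝ) := by
        rw [div_add' _ _ _ hM2R.ne', div_le_iff₀ hM2R]
        nlinarith
      refine this.trans (le_min (le_min (by linarith) hM2N12)
        (le_min (le_max_of_le_left (by linarith)) (le_max_left _ _)))
    · intro hc
      exfalso
      obtain ⟨_, _, _, h4', _⟩ := hc
      linarith
end
end

section
/- (HIA parameter consistency, Case III second corner point.) Let M2 > M1 > N1 ≥ N2 ≥ 1 be integers with M2 ≤ N1+N2 and N1(M2−N2) > M2(M1−N2). Set d1* = (M1−N2)·M2, d2* = N2·M2, T = M2, t1 = N2, t2 = M2−N2, x = M1−N2. Then: (a) d1* − x·t1 = (M1−N2)·t2; (b) d1* < N1·t2; (c) (M2−N2)·t1 = N2·t2; and (d) the achieved DoF pair (d1*/T, d2*/T) = (M1−N2, N2) belongs to the region Ph1. -/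
open Set

noncomputable section

/-- HIA parameter consistency, Case III second corner point: with M2 > M1 > N1 ≥ N2 ≥ 1,
M2 ≤ N1+N2 and N1(M2−N2) > M2(M1−N2), the parameters d1* = (M1−N2)·M2, d2* = N2·M2,
T = M2, t1 = N2, t2 = M2−N2, x = M1−N2 satisfy the HIA constraints, and the achieved
DoF pair (d1*/T, d2*/T) = (M1−N2, N2) belongs to Ph1. -/
theorem hia_caseIII_corner2 (M1 M2 N1 N2 : ℕ)
    (h1 : M2 > M1) (h2 : M1 > N1) (h3 : N1 ≥ N2) (h4 : 1 ≤ N2) (h5 : M2 ≤ N1 + N2)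
    (h6 : (N1 : ℤ) * ((M2 : ℤ) - (N2 : ℤ)) > (M2 : ℤ) * ((M1 : ℤ) - (N2 : ℤ))) :
    let d1s : ℤ := ((M1 : ℤ) - (N2 : ℤ)) * (M2 : ℤ)
    let d2s : ℤ := (N2 : ℤ) * (M2 : ℤ)
    let T : ℤ := (M2 : ℤ)
    let t1 : ℤ := (N2 : ℤ)
    let t2 : ℤ := (M2 : ℤ) - (N2 : ℤ)
    let x : ℤ := (M1 : ℤ) - (N2 : ℤ)
    d1s - x * t1 = ((M1 : ℤ) - (N2 : ℤ)) * t2 ∧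
    d1s < (N1 : ℤ) * t2 ∧
    ((M2 : ℤ) - (N2 : ℤ)) * t1 = (N2 : ℤ) * t2 ∧
    ((d1s : ℝ) / (T : ℝ), (d2s : ℝ) / (T : ℝ)) = ((M1 : ℝ) - (N2 : ℝ), (N2 : ℝ)) ∧
    ((d1s : ℝ) / (T : ℝ), (d2s : ℝ) / (T : ℝ)) ∈ Ph1 M1 M2 N1 N2 := by
  intro d1s d2s T t1 t2 x
  have hM2pos : (0:ℝ) < (M2:ℝ) := by exact_mod_cast (by omega : 0 < M2)
  -- real versions of hypotheses
  have h1' : (M2:ℝ) > (M1:ℝ) := by exact_mod_cast h1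
  have h2' : (M1:ℝ) > (N1:ℝ) := by exact_mod_cast h2
  have h3' : (N1:ℝ) ≥ (N2:ℝ) := by exact_mod_cast h3
  have h4' : (1:ℝ) ≤ (N2:ℝ) := by exact_mod_cast h4
  have h5' : (M2:ℝ) ≤ (N1:ℝ) + (N2:ℝ) := by exact_mod_cast h5
  have h6' : (N1:ℝ) * ((M2:ℝ) - (N2:ℝ)) > (M2:ℝ) * ((M1:ℝ) - (N2:ℝ)) := by
    exact_mod_cast h6
  have hM1N : (M1:ℝ) - (N2:ℝ) < (N1:ℝ) := by nlinarith
  have hM2ne : (M2:ℝ) ≠ 0 := ne_of_gt hM2pos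
  have heq : ((d1s:ℝ) / (T:ℝ), (d2s:ℝ) / (T:ℝ)) = ((M1:ℝ) - (N2:ℝ), (N2:ℝ)) := by
    simp only [d1s, d2s, T]
    push_cast
    rw [Prod.mk.injEq]
    constructor <;> field_simp
  refine ⟨by ring, ?_, by ring, heq, ?_⟩
  · show ((M1:ℤ) - N2) * M2 < (N1:ℤ) * ((M2:ℤ) - N2)
    linarith [h6, mul_comm ((M1:ℤ)-(N2:ℤ)) (M2:ℤ)]
  rw [heq]
  have hN1pos : (0:ℝ) < (N1:ℝ) := by linarith
  simp only [Ph1, Set.mem_setOf_eq, L01, L02, L2, L3, L5]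
  refine ⟨⟨by linarith, ?_⟩, ⟨by linarith, ?_⟩, ?_, ?_, ?_⟩
  · rw [min_eq_right (le_of_lt h2')]; linarith
  · rw [min_eq_right (le_of_lt (lt_trans (lt_of_le_of_lt h3' h2') h1'))]
  · rw [min_eq_left (by linarith : (N1:ℝ) ≤ (M2:ℝ)),
        min_eq_right h5', min_eq_left (by linarith : (N1:ℝ) ≤ (M1:ℝ) + (M2:ℝ))]
    rw [div_add_div _ _ (ne_of_gt hN1pos) hM2ne,
        div_le_div_iff₀ (by positivity) hN1pos]
    nlinarith [mul_lt_mul_of_pos_right h6' hN1pos]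
  · have he : (M1:ℝ) - (N2:ℝ) + (N2:ℝ) = (M1:ℝ) := by ring
    rw [he]
    refine le_min (le_min (by linarith) (by linarith)) (le_min ?_ ?_)
    · exact le_max_left _ _
    · exact le_trans (le_of_lt h1') (le_max_left _ _)
  · intro hc
    exact absurd hc.2.2.2.1 (by linarith)
end
end
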